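/- arXiv:2305.19661 — 2 statements merged into one kernel-verified Lean document; each statement's English description precedes it below -/
import Mathlib

section
/- Let Γ = X_a(m,n,k,ℓ) where m ≥ 4, n ≥ 6 and ℓ ∈ ℤ_n are all even and k ∈ ℤ_n is odd with gcd(k,n) = 1, 2k ≠ ±2 and 2k² = ±2 in ℤ_n. Then there exists an automorphism γ ∈ Aut(Γ) preserving the 2-factor C and mapping v_{0,0} to v_{1,1} if and only if one of the following holds (writing n = 2n'): (i) ℓk = ±ℓ and at least one of k² = ±1 and 4 | m holds; (ii) k² ≠ ±1, m ≡ 2 (mod 4) and ℓk = n' ± ℓ. -/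
namespace CubicFIG

open SimpleGraph

variable {V : Type*}

/-- `f` is an automorphism of the graph `Γ`. -/
def IsAut (Γ : SimpleGraph V) (f : Equiv.Perm V) : Prop :=
  ∀ u v : V, Γ.Adj (f u) (f v) ↔ Γ.Adj u v

/-- `f` preserves (the edge set of) the subgraph `H` (e.g. a 2-factor). -/
def Preserves (H : SimpleGraph V) (f : Equiv.Perm V) : Prop :=
  ∀ u v : V, H.Adj u v → H.Adj (f u) (f v)

/-- `Γ` is vertex-transitive. -/
def IsVertexTransitive (Γ : SimpleGraph V) : Prop :=
  ∀ u v : V, ∃ f : Equiv.Perm V, IsAut Γ f ∧ f u = v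

/-- `Γ` is cubic. -/
def IsCubic (Γ : SimpleGraph V) : Prop := ∀ v : V, (Γ.neighborSet v).ncard = 3

/-- The edge set of `Γ` is partitioned into the 2-factor `H` (a spanning 2-regular subgraph,
whose cycles are the connected components of `H`) and a 1-factor (the remaining edges,
which form a perfect matching). -/
def FactorPartition (Γ H : SimpleGraph V) : Prop :=
  H ≤ Γ ∧ (∀ v : V, (H.neighborSet v).ncard = 2) ∧
    (∀ v : V, {w : V | Γ.Adj v w ∧ ¬ H.Adj v w}.ncard = 1)

/-- The quotient graph `Γ_C` of `Γ` with respect to the 2-factor `H`: its vertices are the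
cycles of the 2-factor, i.e. the connected components of `H`, two of them being adjacent iff
some vertex of one is `Γ`-adjacent to some vertex of the other. -/
def quotientGraph (Γ H : SimpleGraph V) : SimpleGraph H.ConnectedComponent :=
  SimpleGraph.fromRel fun c d =>
    ∃ u v : V, Γ.Adj u v ∧ H.connectedComponentMk u = c ∧ H.connectedComponentMk v = d

/-- A graph is a cycle iff it is finite, connected and 2-regular. -/
def IsCycleGraph {W : Type*} (G : SimpleGraph W) : Prop :=
  Finite W ∧ G.Connected ∧ ∀ w : W, (G.neighborSet w).ncard = 2

/-- `Γ` is of alternating cycle quotient type with respect to the 2-factor `H`: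
the edge set of `Γ` is partitioned into the 2-factor `H` and a 1-factor, the quotient
graph is a cycle, and any two vertices adjacent along a common cycle of the 2-factor
have their outside neighbors in distinct cycles of the 2-factor. -/
def AltCQT (Γ H : SimpleGraph V) : Prop :=
  IsCubic Γ ∧ FactorPartition Γ H ∧ IsCycleGraph (quotientGraph Γ H) ∧
  ∀ ⦃u v u' v' : V⦄, H.Adj u v → Γ.Adj u u' → ¬ H.Adj u u' → Γ.Adj v v' → ¬ H.Adj v v' →
    H.connectedComponentMk u' ≠ H.connectedComponentMk v'

/-- The relation giving the cycle ("non-link") edges of `X_a(m,n,S,ℓ)`: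
`v_{i,j} ∼ v_{i,j+a_i}, v_{i,j+b_i}` for `j ≡ i (mod 2)`. -/
def XaCycleRel (m n : ℕ) (a b : ZMod m → ZMod n) (u v : ZMod m × ZMod n) : Prop :=
  u.2.val % 2 = u.1.val % 2 ∧ u.1 = v.1 ∧ (v.2 = u.2 + a u.1 ∨ v.2 = u.2 + b u.1)

/-- The relation giving the "link" edges of `X_a(m,n,S,ℓ)`:
`v_{i,j} ∼ v_{i+1,j}` for `0 ≤ i ≤ m-2`, `j ≡ i (mod 2)`, and
`v_{m-1,j} ∼ v_{0,j+ℓ}` for `j ≡ m-1 (mod 2)`. -/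
def XaLinkRel (m n : ℕ) (ℓ : ZMod n) (u v : ZMod m × ZMod n) : Prop :=
  (u.2.val % 2 = u.1.val % 2 ∧ u.1.val ≤ m - 2 ∧ v.1 = u.1 + 1 ∧ v.2 = u.2) ∨
  (u.2.val % 2 = (m - 1) % 2 ∧ u.1 = ((m - 1 : ℕ) : ZMod m) ∧ v.1 = 0 ∧ v.2 = u.2 + ℓ)

/-- The graph `X_a(m,n,S,ℓ)` with signature `S = [{a 0, b 0},…,{a (m-1), b (m-1)}]`. -/
def XaGraph (m n : ℕ) (a b : ZMod m → ZMod n) (ℓ : ZMod n) : SimpleGraph (ZMod m × ZMod n) :=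
  SimpleGraph.fromRel fun u v => XaCycleRel m n a b u v ∨ XaLinkRel m n ℓ u v

/-- The 2-factor of `X_a(m,n,S,ℓ)` consisting of the `m` cycles `C_i` induced on the sets
`V_i` (its edges are the non-links). -/
def XaFactor (m n : ℕ) (a b : ZMod m → ZMod n) : SimpleGraph (ZMod m × ZMod n) :=
  SimpleGraph.fromRel (XaCycleRel m n a b)

/-- Admissibility of the parameters of `X_a(m,n,S,ℓ)`: `m ≥ 3`, `n ≥ 4` even, `ℓ` of the
same parity as `m`, `a 0 = 1`, `b 0 = -1`, and all the `a i, b i` distinct and odd with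
`gcd(b i - a i, n) = 2`. -/
def Admissible (m n : ℕ) (a b : ZMod m → ZMod n) (ℓ : ZMod n) : Prop :=
  3 ≤ m ∧ 4 ≤ n ∧ n % 2 = 0 ∧ ℓ.val % 2 = m % 2 ∧ a 0 = 1 ∧ b 0 = -1 ∧
    ∀ i : ZMod m, a i ≠ b i ∧ (a i).val % 2 = 1 ∧ (b i).val % 2 = 1 ∧
      Nat.gcd (b i - a i).val n = 2

/-- The honeycomb toroidal graph `HTG(m,n,ℓ)`: the graph `X_a(m,n,S,ℓ)` whose signature
consists of `m` copies of `{-1,1}`. -/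
def HTG (m n : ℕ) (ℓ : ZMod n) : SimpleGraph (ZMod m × ZMod n) :=
  XaGraph m n (fun _ => 1) (fun _ => -1) ℓ

/-- The signature `[1,k,1,k,…,1,k]`. -/
def kSig (m n : ℕ) (k : ZMod n) : ZMod m → ZMod n :=
  fun i => if i.val % 2 = 0 then 1 else k

/-- The graph `X_a(m,n,k,ℓ)`, i.e. `X_a(m,n,S,ℓ)` with signature `S = [1,k,1,k,…,1,k]`. -/
def XaK (m n : ℕ) (k ℓ : ZMod n) : SimpleGraph (ZMod m × ZMod n) :=
  XaGraph m n (kSig m n k) (fun i => -(kSig m n k i)) ℓ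

/-- The 2-factor of `X_a(m,n,k,ℓ)` consisting of the `m` cycles `C_i`. -/
def XaKFactor (m n : ℕ) (k : ZMod n) : SimpleGraph (ZMod m × ZMod n) :=
  XaFactor m n (kSig m n k) (fun i => -(kSig m n k i))

/-- Assumption A: `Γ = X_a(m,n,S,ℓ)` with `m ≥ 3`, `n ≥ 6` even, `ℓ` of the same parity as
`m`, signature `S = [k 0, …, k (m-1)]` (that is, `{a i, b i} = {k i, -(k i)}`) with `k 0 = 1`
and each `k i` coprime to `n`, admitting a vertex-transitive subgroup of `Aut(Γ)` preserving
the 2-factor consisting of the cycles `C_i`. -/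
def AssumptionA (m n : ℕ) (k : ZMod m → ZMod n) (ℓ : ZMod n) : Prop :=
  3 ≤ m ∧ 6 ≤ n ∧ n % 2 = 0 ∧ ℓ.val % 2 = m % 2 ∧ k 0 = 1 ∧
  (∀ i : ZMod m, Nat.Coprime (k i).val n) ∧
  ∃ G : Subgroup (Equiv.Perm (ZMod m × ZMod n)),
    (∀ g ∈ G, IsAut (XaGraph m n k (fun i => -(k i)) ℓ) g) ∧
    (∀ g ∈ G, Preserves (XaFactor m n k (fun i => -(k i))) g) ∧
    ∀ u v : ZMod m × ZMod n, ∃ g ∈ G, g u = v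

/-- Condition (II): `m ≥ 4` and `n ≥ 6` even, `ℓ ∈ ℤ_n` even, `k ∈ ℤ_n` odd with
`gcd(k,n) = 1`, `2k ≠ ±2`, `2k² = ±2`, and (writing `n = 2n'`) either `ℓk = ±ℓ` and at
least one of `k² = ±1` and `4 ∣ m` holds, or `ℓk = n' ± ℓ`, `m ≡ 2 (mod 4)` and
`k² = n' ± 1`. -/
def CondII (m n : ℕ) (k ℓ : ZMod n) : Prop :=
  4 ≤ m ∧ m % 2 = 0 ∧ 6 ≤ n ∧ n % 2 = 0 ∧ ℓ.val % 2 = 0 ∧ k.val % 2 = 1 ∧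
  Nat.Coprime k.val n ∧ 2 * k ≠ 2 ∧ 2 * k ≠ -2 ∧ (2 * k ^ 2 = 2 ∨ 2 * k ^ 2 = -2) ∧
  (((ℓ * k = ℓ ∨ ℓ * k = -ℓ) ∧ ((k ^ 2 = 1 ∨ k ^ 2 = -1) ∨ m % 4 = 0)) ∨
   ((ℓ * k = (↑(n / 2) : ZMod n) + ℓ ∨ ℓ * k = (↑(n / 2) : ZMod n) - ℓ) ∧ m % 4 = 2 ∧
     (k ^ 2 = (↑(n / 2) : ZMod n) + 1 ∨ k ^ 2 = (↑(n / 2) : ZMod n) - 1)))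

/-- `Γ` (with distinguished 2-factor `H`, whose edges are the non-links) has a 10-cycle
whose code (the cyclic 0/1 sequence recording links (0) and non-links (1), up to rotation
and reflection) is given by `c`. -/
def HasTenCycleWithCode (Γ H : SimpleGraph V) (c : ZMod 10 → Prop) : Prop :=
  ∃ v : ZMod 10 → V, Function.Injective v ∧
    ∀ j : ZMod 10, Γ.Adj (v j) (v (j + 1)) ∧ (H.Adj (v j) (v (j + 1)) ↔ c j)

/-- The code `1⁶01²0` of 10-cycles of type 2. -/
def type2Code : ZMod 10 → Prop := fun j => j.val ≠ 6 ∧ j.val ≠ 9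

/-- The code `1³0101010` of 10-cycles of type 3. -/
def type3Code : ZMod 10 → Prop :=
  fun j => j.val = 0 ∨ j.val = 1 ∨ j.val = 2 ∨ j.val = 4 ∨ j.val = 6 ∨ j.val = 8

/-- `Γ` is 2-arc-regular: the automorphism group acts regularly on 2-arcs. -/
def TwoArcRegular (Γ : SimpleGraph V) : Prop :=
  ∀ ⦃v0 v1 v2 w0 w1 w2 : V⦄, Γ.Adj v0 v1 → Γ.Adj v1 v2 → v0 ≠ v2 →
    Γ.Adj w0 w1 → Γ.Adj w1 w2 → w0 ≠ w2 →
    ∃! f : Equiv.Perm V, IsAut Γ f ∧ f v0 = w0 ∧ f v1 = w1 ∧ f v2 = w2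


/-! ### Auxiliary lemmas -/

section AuxParity

variable {n : ℕ}

lemma parity_add [NeZero n] (hn : n % 2 = 0) (x y : ZMod n) :
    (x + y).val % 2 = (x.val + y.val) % 2 := by
  rw [ZMod.val_add, Nat.mod_mod_of_dvd _ (Nat.dvd_of_mod_eq_zero hn)]

lemma parity_mul [NeZero n] (hn : n % 2 = 0) (x y : ZMod n) :
    (x * y).val % 2 = (x.val * y.val) % 2 := by
  rw [ZMod.val_mul, Nat.mod_mod_of_dvd _ (Nat.dvd_of_mod_eq_zero hn)]

lemma parity_natCast [NeZero n] (hn : n % 2 = 0) (a : ℕ) :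
    ((a : ZMod n)).val % 2 = a % 2 := by
  rw [ZMod.val_natCast, Nat.mod_mod_of_dvd _ (Nat.dvd_of_mod_eq_zero hn)]

lemma parity_neg [NeZero n] (hn : n % 2 = 0) (x : ZMod n) :
    (-x).val % 2 = x.val % 2 := by
  by_cases hx : x = 0
  · subst hx; simp
  · rw [ZMod.neg_val, if_neg hx]
    have h1 : x.val < n := ZMod.val_lt x
    have h2 : x.val ≠ 0 := fun h => hx (by
      have := ZMod.natCast_rightInverse x
      rw [← this, h]; simp)
    omega

lemma gen_ind [NeZero n] {s s' : ZMod n} (hs : s * s' = 1) {Q : ZMod n → Prop}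
    (h0 : Q 0) (hstep : ∀ j, Q j → Q (j + s)) : ∀ j, Q j := by
  have key : ∀ d : ℕ, Q ((d : ZMod n) * s) := by
    intro d; induction d with
    | zero => simpa using h0
    | succ d ih =>
      have h : ((d+1 : ℕ) : ZMod n) * s = (d : ZMod n) * s + s := by push_cast; ring
      rw [h]; exact hstep _ ih
  intro j
  have := key (s' * j).val
  rwa [ZMod.natCast_rightInverse (s' * j), show s' * j * s = j * (s * s') by ring, hs,
    mul_one] at this

end AuxParity

lemma adj_rev {V : Type*} [Finite V] {G : SimpleGraph V} {f : Equiv.Perm V}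
    (h : ∀ u v, G.Adj u v → G.Adj (f u) (f v)) :
    ∀ u v, G.Adj (f u) (f v) → G.Adj u v := by
  have key : ∀ (d : ℕ) u v, G.Adj u v → G.Adj ((f^d) u) ((f^d) v) := by
    intro d; induction d with
    | zero => intro u v huv; simpa using huv
    | succ d ih =>
      intro u v huv
      rw [pow_succ, Equiv.Perm.mul_apply, Equiv.Perm.mul_apply]
      exact ih _ _ (h _ _ huv)
  intro u v huv
  have hpos : 0 < orderOf f := orderOf_pos f
  have h2 := key (orderOf f - 1) (f u) (f v) huv
  have heq : ∀ w, (f ^ (orderOf f - 1)) (f w) = w := by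
    intro w
    have h3 : (f ^ (orderOf f - 1)) (f w) = (f ^ (orderOf f - 1) * f) w := rfl
    rw [h3, ← pow_succ, Nat.sub_add_cancel hpos, pow_orderOf_eq_one]; rfl
  rwa [heq, heq] at h2

/-- The subgraph of link edges. -/
def LGraph (m n : ℕ) (ℓ : ZMod n) : SimpleGraph (ZMod m × ZMod n) :=
  SimpleGraph.fromRel (XaLinkRel m n ℓ)

lemma xaK_adj_iff (m n : ℕ) (k ℓ : ZMod n) (u v : ZMod m × ZMod n) :
    (XaK m n k ℓ).Adj u v ↔ (XaKFactor m n k).Adj u v ∨ (LGraph m n ℓ).Adj u v := by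
  simp only [XaK, XaGraph, XaKFactor, XaFactor, LGraph, SimpleGraph.fromRel_adj]
  tauto

section Charac

variable {m n : ℕ} {k ℓ : ZMod n}

lemma factor_adj [NeZero n] (hn6 : 6 ≤ n) (hneven : n % 2 = 0) (hkodd : k.val % 2 = 1)
    (p q : ZMod m) (y z : ZMod n) :
    (XaKFactor m n k).Adj (p, y) (q, z) ↔
      q = p ∧ (z = y + kSig m n k p ∨ z = y - kSig m n k p) := by
  have hs_odd : ∀ r : ZMod m, (kSig m n k r).val % 2 = 1 := by
    intro r; unfold kSig; split
    · have h1 : 1 % n = 1 := Nat.mod_eq_of_lt (by omega)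
      rw [ZMod.val_one_eq_one_mod, h1]
    · exact hkodd
  have hsne : kSig m n k p ≠ 0 := by
    intro h; have := hs_odd p; rw [h] at this; simp [ZMod.val_zero] at this
  simp only [XaKFactor, XaFactor, SimpleGraph.fromRel_adj, XaCycleRel]
  constructor
  · rintro ⟨hne, ⟨hpar, h1, h2 | h2⟩ | ⟨hpar, h1, h2 | h2⟩⟩
    · exact ⟨h1.symm, Or.inl h2⟩
    · exact ⟨h1.symm, Or.inr (by rw [h2]; ring)⟩
    · subst h1; exact ⟨rfl, Or.inr (by rw [h2]; ring)⟩
    · subst h1; exact ⟨rfl, Or.inl (by rw [h2]; ring)⟩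
  · rintro ⟨rfl, h2⟩
    have hzy : z ≠ y := by
      rcases h2 with h2 | h2 <;> rw [h2] <;> intro h <;> apply hsne
      · have := sub_eq_zero.mpr h.symm; simpa using this
      · have := sub_eq_zero.mpr h; simpa [sub_sub_cancel] using this
    refine ⟨fun h => hzy (congrArg Prod.snd h).symm, ?_⟩
    by_cases hy : y.val % 2 = q.val % 2
    · refine Or.inl ⟨hy, rfl, ?_⟩
      rcases h2 with h2 | h2
      · exact Or.inl h2
      · exact Or.inr (by rw [h2]; ring)
    · have hz : z.val % 2 = q.val % 2 := by
        have hy2 : y.val % 2 < 2 := Nat.mod_lt _ (by norm_num)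
        have hq2 : q.val % 2 < 2 := Nat.mod_lt _ (by norm_num)
        rcases h2 with h2 | h2
        · rw [h2, parity_add hneven, Nat.add_mod, hs_odd q]
          omega
        · rw [h2, sub_eq_add_neg, parity_add hneven, Nat.add_mod, parity_neg hneven, hs_odd q]
          omega
      refine Or.inr ⟨hz, rfl, ?_⟩
      rcases h2 with h2 | h2
      · exact Or.inr (by rw [h2]; ring)
      · exact Or.inl (by rw [h2]; ring)

lemma m1_add_one (hm : 4 ≤ m) : ((m - 1 : ℕ) : ZMod m) + 1 = 0 := by
  have h : ((m - 1 : ℕ) : ZMod m) + 1 = ((m - 1 + 1 : ℕ) : ZMod m) := by push_cast; ring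
  rw [h, show m - 1 + 1 = m by omega, ZMod.natCast_self]

lemma link_levels (hm : 4 ≤ m) {u v : ZMod m × ZMod n} (h : (LGraph m n ℓ).Adj u v) :
    v.1 = u.1 + 1 ∨ u.1 = v.1 + 1 := by
  rcases h with ⟨hne, h | h⟩
  · rcases h with ⟨_, _, h1, _⟩ | ⟨_, h1, h2, _⟩
    · exact Or.inl h1
    · left; rw [h1, h2, m1_add_one hm]
  · rcases h with ⟨_, _, h1, _⟩ | ⟨_, h1, h2, _⟩
    · exact Or.inr h1
    · right; rw [h1, h2, m1_add_one hm]

lemma two_ne_zero' (hm : 4 ≤ m) : (2 : ZMod m) ≠ 0 := by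
  haveI : NeZero m := ⟨by omega⟩
  intro h
  have h2 : ((2:ℕ) : ZMod m).val = 2 := ZMod.val_cast_of_lt (by omega)
  rw [show ((2:ℕ) : ZMod m) = (2 : ZMod m) by push_cast; ring, h] at h2
  simp at h2

lemma one_ne_zero' (hm : 4 ≤ m) : (1 : ZMod m) ≠ 0 := by
  haveI : NeZero m := ⟨by omega⟩
  intro h
  have h2 : ((1:ℕ) : ZMod m).val = 1 := ZMod.val_cast_of_lt (by omega)
  rw [show ((1:ℕ) : ZMod m) = (1 : ZMod m) by push_cast; ring, h] at h2
  simp at h2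

lemma link_adj_succ [NeZero m] (hm : 4 ≤ m) (ℓ : ZMod n) (p : ZMod m) (hp : p.val ≤ m - 2)
    (y z : ZMod n) :
    (LGraph m n ℓ).Adj (p, y) (p + 1, z) ↔ z = y ∧ y.val % 2 = p.val % 2 := by
  have hm1 : ((m - 1 : ℕ) : ZMod m).val = m - 1 := ZMod.val_cast_of_lt (by omega)
  have h1v : ((1 : ZMod m)).val = 1 := by
    have h : ((1:ℕ) : ZMod m) = (1 : ZMod m) := by push_cast; ring
    rw [← h, ZMod.val_cast_of_lt (by omega)]
  have hpval : p ≠ ((m - 1 : ℕ) : ZMod m) := by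
    intro h; rw [h, hm1] at hp; omega
  constructor
  · intro h
    rcases (SimpleGraph.fromRel_adj _ _ _).mp h with ⟨hne, h | h⟩
    · rcases h with ⟨hpar, _, _, h4⟩ | ⟨_, h2, _, _⟩
      · exact ⟨h4, hpar⟩
      · exact absurd h2 hpval
    · rcases h with ⟨_, _, h3, _⟩ | ⟨_, h2, h3, _⟩
      · exfalso
        have h5 : p = p + 1 + 1 := h3
        have h6 : (2 : ZMod m) = 0 := by linear_combination -h5
        exact two_ne_zero' hm h6
      · exfalso
        have h2' : p + 1 = ((m - 1 : ℕ) : ZMod m) := h2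
        have h3' : p = (0 : ZMod m) := h3
        rw [h3', zero_add] at h2'
        have h7 := congrArg ZMod.val h2'
        rw [hm1, h1v] at h7
        omega
  · rintro ⟨rfl, hpar⟩
    refine (SimpleGraph.fromRel_adj _ _ _).mpr ⟨?_, Or.inl (Or.inl ⟨hpar, hp, rfl, rfl⟩)⟩
    intro h
    have h5 : p = p + 1 := congrArg Prod.fst h
    have h6 : (1 : ZMod m) = 0 := by linear_combination -h5
    exact one_ne_zero' hm h6

lemma link_adj_wrap [NeZero m] (hm : 4 ≤ m) (ℓ : ZMod n) (y z : ZMod n) :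
    (LGraph m n ℓ).Adj (((m - 1 : ℕ) : ZMod m), y) (0, z) ↔
      z = y + ℓ ∧ y.val % 2 = (m - 1) % 2 := by
  have hm1 : ((m - 1 : ℕ) : ZMod m).val = m - 1 := ZMod.val_cast_of_lt (by omega)
  have h1v : ((1 : ZMod m)).val = 1 := by
    have h : ((1:ℕ) : ZMod m) = (1 : ZMod m) := by push_cast; ring
    rw [← h, ZMod.val_cast_of_lt (by omega)]
  constructor
  · intro h
    rcases (SimpleGraph.fromRel_adj _ _ _).mp h with ⟨hne, h | h⟩
    · rcases h with ⟨_, h2, _, _⟩ | ⟨hpar, _, _, h4⟩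
      · exfalso; have h2' : ((m - 1 : ℕ) : ZMod m).val ≤ m - 2 := h2
        rw [hm1] at h2'; omega
      · exact ⟨h4, hpar⟩
    · rcases h with ⟨_, _, h3, _⟩ | ⟨_, h2, _, _⟩
      · exfalso
        have h3' : ((m - 1 : ℕ) : ZMod m) = (0 : ZMod m) + 1 := h3
        rw [zero_add] at h3'
        have h7 := congrArg ZMod.val h3'
        rw [hm1, h1v] at h7
        omega
      · exfalso
        have h2' : (0 : ZMod m) = ((m - 1 : ℕ) : ZMod m) := h2
        have h7 := congrArg ZMod.val h2'
        rw [hm1, ZMod.val_zero] at h7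
        omega
  · rintro ⟨rfl, hpar⟩
    refine (SimpleGraph.fromRel_adj _ _ _).mpr ⟨?_, Or.inl (Or.inr ⟨hpar, rfl, rfl, rfl⟩)⟩
    intro h
    have h5 : ((m - 1 : ℕ) : ZMod m) = 0 := congrArg Prod.fst h
    have h7 := congrArg ZMod.val h5
    rw [hm1, ZMod.val_zero] at h7
    omega

end Charac

/-- existence of an automorphism preserving `C` mapping `v_{0,0}` to `v_{1,1}`. -/
theorem statement9 (m n : ℕ) (k ℓ : ZMod n)
    (hm : 4 ≤ m) (hmeven : m % 2 = 0) (hn : 6 ≤ n) (hneven : n % 2 = 0)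
    (hl : ℓ.val % 2 = 0) (hkodd : k.val % 2 = 1) (hkcop : Nat.Coprime k.val n)
    (h2k : 2 * k ≠ 2 ∧ 2 * k ≠ -2) (h2k2 : 2 * k ^ 2 = 2 ∨ 2 * k ^ 2 = -2) :
    (∃ f : Equiv.Perm (ZMod m × ZMod n), IsAut (XaK m n k ℓ) f ∧
        Preserves (XaKFactor m n k) f ∧ f (0, 0) = (1, 1)) ↔
    (((ℓ * k = ℓ ∨ ℓ * k = -ℓ) ∧ ((k ^ 2 = 1 ∨ k ^ 2 = -1) ∨ m % 4 = 0)) ∨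
     ((k ^ 2 ≠ 1 ∧ k ^ 2 ≠ -1) ∧ m % 4 = 2 ∧
       (ℓ * k = (↑(n / 2) : ZMod n) + ℓ ∨ ℓ * k = (↑(n / 2) : ZMod n) - ℓ))) := by
  haveI : NeZero n := ⟨by omega⟩
  haveI : NeZero m := ⟨by omega⟩
  -- basic numeral facts
  have hval1n : (1 : ZMod n).val = 1 := by
    have h1 : 1 % n = 1 := Nat.mod_eq_of_lt (by omega)
    rw [ZMod.val_one_eq_one_mod, h1]
  have h2ne : (2 : ZMod n) ≠ 0 := by
    intro h
    have h2 : ((2:ℕ) : ZMod n).val = 2 := ZMod.val_cast_of_lt (by omega)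
    rw [show ((2:ℕ) : ZMod n) = (2 : ZMod n) by push_cast; ring, h] at h2
    simp at h2
  have h4ne : (4 : ZMod n) ≠ 0 := by
    intro h
    have h2 : ((4:ℕ) : ZMod n).val = 4 := ZMod.val_cast_of_lt (by omega)
    rw [show ((4:ℕ) : ZMod n) = (4 : ZMod n) by push_cast; ring, h] at h2
    simp at h2
  have h1vm : (1 : ZMod m).val = 1 := by
    have h1 : 1 % m = 1 := Nat.mod_eq_of_lt (by omega)
    rw [ZMod.val_one_eq_one_mod, h1]
  -- the inverse of k
  have hkU : IsUnit k := by
    have h := (ZMod.isUnit_iff_coprime k.val n).mpr hkcop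
    rwa [ZMod.natCast_rightInverse k] at h
  obtain ⟨ku, hku⟩ := hkU
  set k' : ZMod n := ((ku⁻¹ : (ZMod n)ˣ) : ZMod n) with hk'def
  have hkk' : k * k' = 1 := by
    rw [← hku, hk'def]; exact_mod_cast ku.mul_inv
  -- the sign η
  obtain ⟨η, hη, hη2⟩ : ∃ η : ZMod n, (η = 1 ∨ η = -1) ∧ 2 * k ^ 2 = 2 * η := by
    rcases h2k2 with h | h
    · exact ⟨1, Or.inl rfl, by rw [h]; ring⟩
    · exact ⟨-1, Or.inr rfl, by rw [h]; ring⟩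
  have hη21 : η * η = 1 := by rcases hη with rfl | rfl <;> ring
  set D : ZMod n := k' - η * k with hDdef
  have h2kk' : 2 * k = 2 * η * k' := by
    linear_combination k' * hη2 - 2 * k * hkk'
  have h2D : 2 * D = 0 := by
    rw [hDdef]
    linear_combination (-η) * h2kk' - 2 * k' * hη21
  -- parity of k', η, D
  have hk'odd : k'.val % 2 = 1 := by
    have h := parity_mul hneven k k'
    rw [hkk', hval1n, Nat.mul_mod, hkodd] at h
    omega
  have hηodd : η.val % 2 = 1 := by
    rcases hη with rfl | rfl
    · rw [hval1n]
    · rw [show (-1 : ZMod n) = -(1 : ZMod n) by ring, parity_neg hneven, hval1n]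
  have hDeven : D.val % 2 = 0 := by
    have ha := parity_add hneven k' (-(η * k))
    have hb := parity_neg hneven (η * k)
    have hc := parity_mul hneven η k
    have hgoal : D = k' + -(η * k) := by rw [hDdef]; ring
    rw [hgoal, ha]
    have h1 : k'.val % 2 + (-(η * k)).val % 2 = 2 := by
      rw [hb, hc, Nat.mul_mod, hηodd, hkodd, hk'odd]
    omega
  have hsgnD : ∀ x : ZMod n, (x = 1 ∨ x = -1) → x * D = D := by
    rintro x (rfl | rfl)
    · ring
    · linear_combination -h2D
  have hDx0 : ∀ x : ZMod n, x.val % 2 = 0 → D * x = 0 := by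
    intro x hx
    obtain ⟨t, ht⟩ : ∃ t, x.val = 2 * t := ⟨x.val / 2, by omega⟩
    have hx2 : x = ((2 * t : ℕ) : ZMod n) := by rw [← ht, ZMod.natCast_rightInverse x]
    rw [hx2]; push_cast
    linear_combination ((t:ℕ) : ZMod n) * h2D
  have hDx1 : ∀ x : ZMod n, x.val % 2 = 1 → D * x = D := by
    intro x hx
    obtain ⟨t, ht⟩ : ∃ t, x.val = 2 * t + 1 := ⟨x.val / 2, by omega⟩
    have hx2 : x = ((2 * t + 1 : ℕ) : ZMod n) := by rw [← ht, ZMod.natCast_rightInverse x]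
    rw [hx2]; push_cast
    linear_combination ((t:ℕ) : ZMod n) * h2D
  have hD0_of_sq : ∀ ζ : ZMod n, (ζ = 1 ∨ ζ = -1) → k ^ 2 = ζ → D = 0 := by
    intro ζ hζ hsq
    have hζη : ζ = η := by
      have h2ζ : 2 * ζ = 2 * η := by rw [← hsq]; exact hη2
      rcases hζ with rfl | rfl <;> rcases hη with rfl | rfl
      · rfl
      · exfalso; apply h4ne; linear_combination h2ζ
      · exfalso; apply h4ne; linear_combination -h2ζ
      · rfl
    rw [hζη] at hsq
    have hkD : k * D = 0 := by
      rw [hDdef]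
      linear_combination hkk' - η * hsq - hη21
    linear_combination k' * hkD - D * hkk'
  have hhalfadd : ((n/2 : ℕ) : ZMod n) + ((n/2 : ℕ) : ZMod n) = 0 := by
    rw [← Nat.cast_add, show n/2 + n/2 = n by omega, ZMod.natCast_self]
  have hDval : D ≠ 0 → D = ((n/2 : ℕ) : ZMod n) := by
    intro hD0
    have h1 : ((2 * D.val : ℕ) : ZMod n) = 0 := by
      push_cast
      rw [ZMod.natCast_rightInverse D]
      exact h2D
    have h2 := (ZMod.natCast_eq_zero_iff _ n).mp h1
    obtain ⟨cdvd, hc⟩ := h2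
    have h3 : D.val < n := ZMod.val_lt D
    have h4 : D.val ≠ 0 := fun h => hD0 (by
      have := ZMod.natCast_rightInverse D
      rw [← this, h]; simp)
    have hge : 1 ≤ cdvd := by
      rcases Nat.eq_zero_or_pos cdvd with h0 | h0
      · subst h0; rw [Nat.mul_zero] at hc; omega
      · exact h0
    have hlt : cdvd < 2 := by
      by_contra hge2
      have h6 : n * 2 ≤ n * cdvd := Nat.mul_le_mul_left n (by omega)
      omega
    have hc1 : cdvd = 1 := by omega
    subst hc1
    have h5 : D.val = n / 2 := by omega
    rw [← h5, ZMod.natCast_rightInverse D]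
  have hSq0 : m % 4 = 0 → ((m / 2 : ℕ) : ZMod n) * D = 0 := by
    intro h4m
    rw [show m / 2 = 2 * (m / 4) by omega]
    push_cast
    linear_combination ((m/4 : ℕ) : ZMod n) * h2D
  have hSq2 : m % 4 = 2 → ((m / 2 : ℕ) : ZMod n) * D = D := by
    intro h4m
    rw [show m / 2 = 2 * (m / 4) + 1 by omega]
    push_cast
    linear_combination ((m/4 : ℕ) : ZMod n) * h2D
  have torsion : ∀ W1 W2 : ZMod n, (W1 = k' ∨ W1 = -k') → (W2 = k ∨ W2 = -k) →
      2 * (W1 - W2) = 0 → W1 - W2 = D := by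
    have h2D' : 2 * k' - 2 * η * k = 0 := by rw [hDdef] at h2D; linear_combination h2D
    rintro W1 W2 (h1 | h1) (h2 | h2) ht <;> rw [h1, h2] at ht ⊢ <;> rw [hDdef] <;>
      rcases hη with rfl | rfl
    · ring
    · exfalso; apply h4ne; linear_combination k * ht + k * h2D' - 4 * hkk'
    · exfalso; apply h4ne; linear_combination k * ht + k * h2D' - 4 * hkk'
    · ring
    · exfalso; apply h4ne; linear_combination -k * ht + k * h2D' - 4 * hkk'
    · linear_combination -h2D'
    · linear_combination -h2D'
    · exfalso; apply h4ne; linear_combination k' * ht + k' * h2D' - 4 * hkk'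
  -- m-side facts
  have hflip : ∀ p : ZMod m, (p + 1).val % 2 = (p.val + 1) % 2 := by
    intro p
    have h : (p + 1).val = (p.val + 1) % m := by rw [ZMod.val_add, h1vm]
    rw [h, Nat.mod_mod_of_dvd _ (Nat.dvd_of_mod_eq_zero hmeven)]
  have hsig_odd : ∀ p : ZMod m, (kSig m n k p).val % 2 = 1 := by
    intro p; unfold kSig; split
    · rw [hval1n]
    · exact hkodd
  have hsig_unit : ∀ p : ZMod m, kSig m n k p * (if p.val % 2 = 0 then 1 else k') = 1 := by
    intro p; unfold kSig
    by_cases hp : p.val % 2 = 0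
    · rw [if_pos hp, if_pos hp, mul_one]
    · rw [if_neg hp, if_neg hp]; exact hkk'
  have hsig_succ : ∀ p : ZMod m, kSig m n k (p + 1) = if p.val % 2 = 0 then k else 1 := by
    intro p; by_cases hp : p.val % 2 = 0
    · rw [if_pos hp]; unfold kSig; rw [hflip p, if_neg (by omega)]
    · rw [if_neg hp]; unfold kSig; rw [hflip p, if_pos (by omega)]
  have hval_succ : ∀ p : ZMod m, p.val ≤ m - 2 → (p + 1).val = p.val + 1 := by
    intro p hp
    rw [ZMod.val_add, h1vm, Nat.mod_eq_of_lt (by omega)]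
  set M1 : ZMod m := ((m - 1 : ℕ) : ZMod m) with hM1def
  set M2 : ZMod m := ((m - 2 : ℕ) : ZMod m) with hM2def
  have hM1v : M1.val = m - 1 := ZMod.val_cast_of_lt (by omega)
  have hM2v : M2.val = m - 2 := ZMod.val_cast_of_lt (by omega)
  have hM21 : M2 + 1 = M1 := by
    rw [hM1def, hM2def, show m - 1 = (m - 2) + 1 by omega]; push_cast; ring
  have hm21cast : ((m/2 - 1 : ℕ) : ZMod n) + 1 = ((m/2 : ℕ) : ZMod n) := by
    rw [show (m/2 : ℕ) = (m/2 - 1) + 1 by omega]; push_cast; ring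
  constructor
  · rintro ⟨f, hAut, hPres, hf00⟩
    have hPres' : ∀ u v, (XaKFactor m n k).Adj u v → (XaKFactor m n k).Adj (f u) (f v) :=
      fun u v h => hPres u v h
    have hHback := adj_rev hPres'
    have hLdiff : ∀ u v : ZMod m × ZMod n, (LGraph m n ℓ).Adj u v → u.1 ≠ v.1 := by
      intro u v huv heq
      rcases link_levels hm huv with h | h
      · rw [heq] at h; exact one_ne_zero' hm (by linear_combination -h)
      · rw [← heq] at h; exact one_ne_zero' hm (by linear_combination -h)
    have hLpres : ∀ u v, (LGraph m n ℓ).Adj u v → (LGraph m n ℓ).Adj (f u) (f v) := by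
      intro u v huv
      have hG : (XaK m n k ℓ).Adj u v := (xaK_adj_iff m n k ℓ u v).mpr (Or.inr huv)
      have hG' := (hAut u v).mpr hG
      rcases (xaK_adj_iff m n k ℓ _ _).mp hG' with hH' | hL'
      · exfalso
        have h1 := hHback u v hH'
        have h2 := (factor_adj hn hneven hkodd u.1 v.1 u.2 v.2).mp h1
        exact hLdiff u v huv h2.1.symm
      · exact hL'
    have hfst1 : ∀ (p : ZMod m) (y : ZMod n), (f (p, y)).1 = (f (p, 0)).1 := by
      intro p
      refine gen_ind (hsig_unit p) rfl ?_
      intro j hj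
      have hadj : (XaKFactor m n k).Adj (p, j) (p, j + kSig m n k p) :=
        (factor_adj hn hneven hkodd p p j _).mpr ⟨rfl, Or.inl rfl⟩
      have himg := hPres _ _ hadj
      have h1 := (factor_adj hn hneven hkodd (f (p, j)).1 (f (p, j + kSig m n k p)).1
        (f (p, j)).2 (f (p, j + kSig m n k p)).2).mp himg
      rw [h1.1, hj]
    set lv : ZMod m → ZMod m := fun p => (f (p, 0)).1 with hlvdef
    have hlv : ∀ (p : ZMod m) (y : ZMod n), (f (p, y)).1 = lv p := fun p y => hfst1 p y
    have hψinj : ∀ p : ZMod m, Function.Injective (fun j : ZMod n => (f (p, j)).2) := by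
      intro p j j' h
      have h1 : f (p, j) = f (p, j') := Prod.ext_iff.mpr ⟨by rw [hlv, hlv], h⟩
      have h2 := f.injective h1
      exact congrArg Prod.snd h2
    have hlvinj : Function.Injective lv := by
      intro a b hab
      obtain ⟨j, hj⟩ := (Finite.injective_iff_surjective.mp (hψinj a)) ((f (b, 0)).2)
      have h1 : f (a, j) = f (b, 0) := by
        refine Prod.ext_iff.mpr ⟨?_, hj⟩
        rw [hlv a j, hab]
      exact congrArg Prod.fst (f.injective h1)
    have hlv0 : lv 0 = 1 := by
      show (f (0, 0)).1 = 1
      rw [hf00]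
    have h0le : ((0 : ZMod m)).val ≤ m - 2 := by rw [ZMod.val_zero]; omega
    have hlv1 : lv 1 = 2 := by
      have hL0 : (LGraph m n ℓ).Adj (0, 0) ((0 : ZMod m) + 1, (0 : ZMod n)) :=
        (link_adj_succ hm ℓ 0 h0le 0 0).mpr ⟨rfl, by rw [ZMod.val_zero, ZMod.val_zero]⟩
      rw [zero_add] at hL0
      have himg := hLpres _ _ hL0
      rw [hf00] at himg
      have e2 : f ((1 : ZMod m), (0:ZMod n)) = (lv 1, (f ((1:ZMod m), (0:ZMod n))).2) :=
        Prod.ext_iff.mpr ⟨hlv _ _, rfl⟩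
      rw [e2] at himg
      rcases link_levels hm himg with h | h
      · have h' : lv 1 = (1 : ZMod m) + 1 := h
        rw [h']; ring
      · exfalso
        have h' : (1 : ZMod m) = lv 1 + 1 := h
        have h10 : lv 1 = 0 := by linear_combination -h'
        rw [h10] at himg
        have h2 := (link_adj_succ hm ℓ 0 h0le (f ((1:ZMod m), (0:ZMod n))).2 1).mp
          (by rw [zero_add]; exact himg.symm)
        have h3 := h2.1
        rw [← h3, hval1n, ZMod.val_zero] at h2
        exact absurd h2.2 (by norm_num)
    have hcast_succ : ∀ i : ℕ, ((i : ℕ) : ZMod m) + 1 = (((i+1) : ℕ) : ZMod m) := by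
      intro i; push_cast; ring
    have main : ∀ i : ℕ, i + 1 < m →
        lv ((i : ℕ) : ZMod m) = ((i : ℕ) : ZMod m) + 1 ∧
        lv (((i+1) : ℕ) : ZMod m) = (((i+1) : ℕ) : ZMod m) + 1 := by
      intro i
      induction i with
      | zero =>
        intro _
        constructor
        · rw [Nat.cast_zero, hlv0]; ring
        · rw [Nat.cast_one, hlv1]; ring
      | succ i ih =>
        intro hlt
        have hi := ih (by omega)
        refine ⟨hi.2, ?_⟩
        have hI1v : (((i+1 : ℕ)) : ZMod m).val = i + 1 := ZMod.val_cast_of_lt (by omega)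
        have hI1le : (((i+1 : ℕ)) : ZMod m).val ≤ m - 2 := by omega
        have hj0v : ((((i+1) % 2 : ℕ)) : ZMod n).val = (i+1) % 2 := ZMod.val_cast_of_lt (by omega)
        have hL1 : (LGraph m n ℓ).Adj (((i+1 : ℕ) : ZMod m), (((i+1) % 2 : ℕ) : ZMod n))
            (((i+1 : ℕ) : ZMod m) + 1, (((i+1) % 2 : ℕ) : ZMod n)) :=
          (link_adj_succ hm ℓ _ hI1le _ _).mpr ⟨rfl, by rw [hj0v, hI1v]; omega⟩
        have himg := hLpres _ _ hL1
        have e1 : f (((i+1 : ℕ) : ZMod m), (((i+1) % 2 : ℕ) : ZMod n)) =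
            (((i+1 : ℕ) : ZMod m) + 1, (f (((i+1 : ℕ) : ZMod m), (((i+1) % 2 : ℕ) : ZMod n))).2) :=
          Prod.ext_iff.mpr ⟨by rw [hlv, hi.2], rfl⟩
        have e2 : f (((i+1 : ℕ) : ZMod m) + 1, (((i+1) % 2 : ℕ) : ZMod n)) =
            (lv (((i+1 : ℕ) : ZMod m) + 1),
              (f (((i+1 : ℕ) : ZMod m) + 1, (((i+1) % 2 : ℕ) : ZMod n))).2) :=
          Prod.ext_iff.mpr ⟨hlv _ _, rfl⟩
        rw [e1, e2] at himg
        rcases link_levels hm himg with h | h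
        · have h' : lv (((i+1 : ℕ) : ZMod m) + 1) = ((i+1 : ℕ) : ZMod m) + 1 + 1 := h
          rw [hcast_succ (i+1)] at h'
          exact h'
        · exfalso
          have h' : ((i+1 : ℕ) : ZMod m) + 1 = lv (((i+1 : ℕ) : ZMod m) + 1) + 1 := h
          have h2 : lv (((i+1 : ℕ) : ZMod m) + 1) = ((i+1 : ℕ) : ZMod m) := by
            linear_combination -h'
          have h3 : lv ((i : ℕ) : ZMod m) = ((i+1 : ℕ) : ZMod m) := by
            rw [hi.1, hcast_succ i]
          have h4 := hlvinj (h2.trans h3.symm)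
          rw [hcast_succ (i+1)] at h4
          have h5 : ((2:ℕ) : ZMod m) = 0 := by
            push_cast at h4 ⊢
            linear_combination h4
          have h6 : ((2:ℕ) : ZMod m).val = 2 := ZMod.val_cast_of_lt (by omega)
          rw [h5, ZMod.val_zero] at h6
          omega
    have hrot : ∀ p : ZMod m, lv p = p + 1 := by
      intro p
      have hpv : ((p.val : ℕ) : ZMod m) = p := ZMod.natCast_rightInverse p
      by_cases hple : p.val + 1 < m
      · have h := (main p.val hple).1
        rwa [hpv] at h
      · have hpm : p.val = m - 1 := by have := ZMod.val_lt p; omega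
        have h := (main (m-2) (by omega)).2
        rw [show m - 2 + 1 = m - 1 by omega, ← hpm, hpv] at h
        exact h
    have haff : ∀ p : ZMod m, ∃ Wp Cp : ZMod n,
        ((p.val % 2 = 0 ∧ (Wp = k ∨ Wp = -k)) ∨ (p.val % 2 = 1 ∧ (Wp = k' ∨ Wp = -k'))) ∧
        ∀ j : ZMod n, (f (p, j)).2 = Cp + Wp * j := by
      intro p
      set s : ZMod n := kSig m n k p with hs
      set s' : ZMod n := (if p.val % 2 = 0 then 1 else k') with hs'
      have hss' : s * s' = 1 := hsig_unit p
      set t : ZMod n := kSig m n k (p + 1) with ht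
      set ψ : ZMod n → ZMod n := fun j => (f (p, j)).2 with hψdef
      have hψi : Function.Injective ψ := hψinj p
      have h2s : ∀ x : ZMod n, x + s + s = x → False := by
        intro x hx
        have h2s0 : 2 * s = 0 := by linear_combination hx
        have h20 : (2 : ZMod n) = 0 := by linear_combination s' * h2s0 - 2 * hss'
        exact h2ne h20
      have hstep : ∀ j, ψ (j + s) = ψ j + t ∨ ψ (j + s) = ψ j - t := by
        intro j
        have hadj : (XaKFactor m n k).Adj (p, j) (p, j + s) :=
          (factor_adj hn hneven hkodd p p j (j + s)).mpr ⟨rfl, Or.inl rfl⟩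
        have himg := hPres _ _ hadj
        have e1 : f (p, j) = (p + 1, ψ j) := Prod.ext_iff.mpr ⟨by rw [hlv, hrot], rfl⟩
        have e2 : f (p, j + s) = (p + 1, ψ (j + s)) := Prod.ext_iff.mpr ⟨by rw [hlv, hrot], rfl⟩
        rw [e1, e2] at himg
        have h3 := (factor_adj hn hneven hkodd (p+1) (p+1) (ψ j) (ψ (j + s))).mp himg
        rcases h3.2 with h | h
        · left; rw [h, ht]
        · right; rw [h, ht]
      set e0 : ZMod n := ψ (0 + s) - ψ 0 with he0def
      have he0 : e0 = t ∨ e0 = -t := by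
        rcases hstep 0 with h | h
        · left; rw [he0def, h]; ring
        · right; rw [he0def, h]; ring
      have hR : ∀ x, ψ (x + s) = ψ x + e0 := by
        refine gen_ind hss' ?_ ?_
        · rw [he0def]; ring
        · intro x hx
          rcases hstep (x + s) with h | h <;> rcases he0 with he | he
          · rw [h, hx, he]
          · exfalso
            have hbad : ψ (x + s + s) = ψ x := by rw [h, hx, he]; ring
            exact h2s x (hψi hbad)
          · exfalso
            have hbad : ψ (x + s + s) = ψ x := by rw [h, hx, he]; ring
            exact h2s x (hψi hbad)
          · rw [h, hx, he]; ring
      have hQ : ∀ j : ZMod n, ψ (s * j) = ψ 0 + e0 * j := by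
        refine gen_ind (s := (1 : ZMod n)) (s' := (1 : ZMod n)) (by ring) ?_ ?_
        · simp
        · intro j hj
          have harg : s * (j + 1) = s * j + s := by ring
          rw [harg, hR, hj]; ring
      refine ⟨e0 * s', ψ 0, ?_, ?_⟩
      · by_cases hp : p.val % 2 = 0
        · left; refine ⟨hp, ?_⟩
          have hs'1 : s' = 1 := by rw [hs', if_pos hp]
          have ht1 : t = k := by rw [ht, hsig_succ p, if_pos hp]
          rcases he0 with he | he
          · left; rw [he, hs'1, ht1]; ring
          · right; rw [he, hs'1, ht1]; ring
        · right; refine ⟨by omega, ?_⟩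
          have hs'1 : s' = k' := by rw [hs', if_neg hp]
          have ht1 : t = 1 := by rw [ht, hsig_succ p, if_neg hp]
          rcases he0 with he | he
          · left; rw [he, hs'1, ht1]; ring
          · right; rw [he, hs'1, ht1]; ring
      · intro j
        have hj : s * (s' * j) = j := by rw [← mul_assoc, hss', one_mul]
        have h5 := hQ (s' * j)
        rw [hj] at h5
        show ψ j = ψ 0 + e0 * s' * j
        rw [h5]; ring
    choose W C hWform hψeq using haff
    have eqN : ∀ p : ZMod m, p.val + 3 ≤ m → ∀ j : ZMod n, j.val % 2 = p.val % 2 →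
        C (p + 1) + W (p + 1) * j = C p + W p * j := by
      intro p hp j hj
      have hpv : p.val ≤ m - 2 := by omega
      have hL1 : (LGraph m n ℓ).Adj (p, j) (p + 1, j) :=
        (link_adj_succ hm ℓ p hpv j j).mpr ⟨rfl, hj⟩
      have himg := hLpres _ _ hL1
      have e1 : f (p, j) = (p + 1, C p + W p * j) :=
        Prod.ext_iff.mpr ⟨by rw [hlv, hrot], hψeq p j⟩
      have e2 : f (p + 1, j) = (p + 1 + 1, C (p+1) + W (p+1) * j) :=
        Prod.ext_iff.mpr ⟨by rw [hlv, hrot], hψeq (p+1) j⟩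
      rw [e1, e2] at himg
      have hp1v : (p + 1).val ≤ m - 2 := by rw [hval_succ p (by omega)]; omega
      exact ((link_adj_succ hm ℓ (p+1) hp1v (C p + W p * j) (C (p+1) + W (p+1) * j)).mp himg).1
    have eqB : ∀ j : ZMod n, j.val % 2 = 0 →
        C M1 + W M1 * j = C M2 + W M2 * j + ℓ := by
      intro j hj
      have hL1 : (LGraph m n ℓ).Adj (M2, j) (M2 + 1, j) :=
        (link_adj_succ hm ℓ M2 (by omega) j j).mpr ⟨rfl, by rw [hj, hM2v]; omega⟩
      rw [hM21] at hL1
      have himg := hLpres _ _ hL1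
      have e1 : f (M2, j) = (M1, C M2 + W M2 * j) :=
        Prod.ext_iff.mpr ⟨by rw [hlv, hrot, hM21], hψeq M2 j⟩
      have e2 : f (M1, j) = (0, C M1 + W M1 * j) :=
        Prod.ext_iff.mpr ⟨by rw [hlv, hrot, hM1def, m1_add_one hm], hψeq M1 j⟩
      rw [e1, e2] at himg
      rw [hM1def] at himg
      exact ((link_adj_wrap hm ℓ (C M2 + W M2 * j) (C M1 + W M1 * j)).mp himg).1
    have eqC : ∀ j : ZMod n, j.val % 2 = 1 →
        C 0 + W 0 * (j + ℓ) = C M1 + W M1 * j := by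
      intro j hj
      have hL1 : (LGraph m n ℓ).Adj (((m - 1 : ℕ) : ZMod m), j) (0, j + ℓ) :=
        (link_adj_wrap hm ℓ j (j + ℓ)).mpr ⟨rfl, by rw [hj]; omega⟩
      rw [← hM1def] at hL1
      have himg := hLpres _ _ hL1
      have e1 : f (M1, j) = (0, C M1 + W M1 * j) :=
        Prod.ext_iff.mpr ⟨by rw [hlv, hrot, hM1def, m1_add_one hm], hψeq M1 j⟩
      have e2 : f (0, j + ℓ) = ((0 : ZMod m) + 1, C 0 + W 0 * (j + ℓ)) :=
        Prod.ext_iff.mpr ⟨by rw [hlv, hrot], hψeq 0 (j + ℓ)⟩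
      rw [e1, e2] at himg
      exact ((link_adj_succ hm ℓ 0 h0le (C M1 + W M1 * j) (C 0 + W 0 * (j + ℓ))).mp himg).1
    have evenstep : ∀ p : ZMod m, p.val + 3 ≤ m → p.val % 2 = 0 → C (p + 1) = C p := by
      intro p hp hev
      have hE0 := eqN p hp 0 (by rw [ZMod.val_zero, hev])
      have hW0' : W (p+1) * 0 = 0 := by ring
      linear_combination hE0
    have oddstep : ∀ p : ZMod m, p.val + 3 ≤ m → p.val % 2 = 1 → C (p + 1) = C p + D := by
      intro p hp hodd
      have hj1 : ((1:ℕ) : ZMod n).val % 2 = p.val % 2 := by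
        rw [ZMod.val_cast_of_lt (by omega)]; omega
      have hj3 : ((3:ℕ) : ZMod n).val % 2 = p.val % 2 := by
        rw [ZMod.val_cast_of_lt (by omega)]; omega
      have hE1 := eqN p hp ((1:ℕ) : ZMod n) hj1
      have hE3 := eqN p hp ((3:ℕ) : ZMod n) hj3
      push_cast at hE1 hE3
      have h2W : 2 * (W p - W (p + 1)) = 0 := by linear_combination hE1 - hE3
      have hWodd : W p = k' ∨ W p = -k' := by
        rcases hWform p with ⟨h0, _⟩ | ⟨_, hw⟩
        · exfalso; omega
        · exact hw
      have hWev : W (p+1) = k ∨ W (p+1) = -k := by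
        rcases hWform (p+1) with ⟨_, hw⟩ | ⟨h0, _⟩
        · exact hw
        · exfalso; rw [hflip p] at h0; omega
      have hT := torsion (W p) (W (p+1)) hWodd hWev h2W
      linear_combination hE1 + hT
    have hC0 : C 0 = 1 := by
      have h5 := hψeq 0 0
      rw [hf00] at h5
      have h5' : (1 : ZMod n) = C 0 + W 0 * 0 := h5
      linear_combination -h5'
    have chain : ∀ t : ℕ, 2*t + 2 ≤ m → C ((2*t : ℕ) : ZMod m) = 1 + ((t:ℕ) : ZMod n) * D := by
      intro t
      induction t with
      | zero =>
        intro _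
        norm_num
        exact hC0
      | succ t ih =>
        intro hle
        have h1 := ih (by omega)
        have hev : (((2*t : ℕ)) : ZMod m).val % 2 = 0 := by
          rw [ZMod.val_cast_of_lt (by omega)]; omega
        have hodd : (((2*t+1 : ℕ)) : ZMod m).val % 2 = 1 := by
          rw [ZMod.val_cast_of_lt (by omega)]; omega
        have heq1 : C (((2*t : ℕ) : ZMod m) + 1) = C ((2*t : ℕ) : ZMod m) :=
          evenstep _ (by rw [ZMod.val_cast_of_lt (by omega)]; omega) hev
        have heq2 : C (((2*t+1 : ℕ) : ZMod m) + 1) = C ((2*t+1 : ℕ) : ZMod m) + D :=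
          oddstep _ (by rw [ZMod.val_cast_of_lt (by omega)]; omega) hodd
        have hc1 : ((2*t : ℕ) : ZMod m) + 1 = ((2*t+1 : ℕ) : ZMod m) := by push_cast; ring
        have hc2 : ((2*t+1 : ℕ) : ZMod m) + 1 = ((2*(t+1) : ℕ) : ZMod m) := by push_cast; ring
        rw [hc1] at heq1
        rw [hc2] at heq2
        rw [heq2, heq1, h1]
        push_cast
        ring
    have hCM2 : C M2 = 1 + ((m/2 - 1 : ℕ) : ZMod n) * D := by
      have h5 := chain (m/2 - 1) (by omega)
      rw [show 2*(m/2 - 1) = m - 2 by omega] at h5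
      rw [hM2def]
      exact h5
    have hCM1 : C M1 = C M2 + ℓ := by
      have h5 := eqB 0 (by rw [ZMod.val_zero])
      linear_combination h5
    have hF1 := eqC ((1:ℕ) : ZMod n) (by rw [ZMod.val_cast_of_lt (by omega)])
    have hF3 := eqC ((3:ℕ) : ZMod n) (by rw [ZMod.val_cast_of_lt (by omega)])
    push_cast at hF1 hF3
    have h2W : 2 * (W M1 - W 0) = 0 := by linear_combination hF1 - hF3
    have hWM1form : W M1 = k' ∨ W M1 = -k' := by
      rcases hWform M1 with ⟨h0, _⟩ | ⟨_, hw⟩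
      · exfalso; rw [hM1v] at h0; omega
      · exact hw
    have hW0form : W 0 = k ∨ W 0 = -k := by
      rcases hWform 0 with ⟨_, hw⟩ | ⟨h0, _⟩
      · exact hw
      · exfalso; rw [ZMod.val_zero] at h0; omega
    have hT := torsion (W M1) (W 0) hWM1form hW0form h2W
    have master : W 0 * ℓ = ℓ + ((m/2 : ℕ) : ZMod n) * D := by
      linear_combination hF1 + hT + hCM1 + hCM2 - hC0 + D * hm21cast
    by_cases hD0 : D = 0
    · have hk2 : k ^ 2 = η := by
        have h1 : k' = η * k := by rw [hDdef] at hD0; linear_combination hD0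
        have h2 : η * k ^ 2 = 1 := by rw [h1] at hkk'; linear_combination hkk'
        linear_combination η * h2 - k^2 * hη21
      left
      constructor
      · rcases hW0form with h | h
        · left; rw [h] at master; rw [hD0] at master; linear_combination master
        · right; rw [h] at master; rw [hD0] at master; linear_combination -master
      · left
        rcases hη with rfl | rfl
        · left; exact hk2
        · right; exact hk2
    · have hk2n1 : k ^ 2 ≠ 1 := fun h => hD0 (hD0_of_sq 1 (Or.inl rfl) h)
      have hk2n2 : k ^ 2 ≠ -1 := fun h => hD0 (hD0_of_sq (-1) (Or.inr rfl) h)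
      have hm4 : m % 4 = 0 ∨ m % 4 = 2 := by omega
      rcases hm4 with h4m | h4m
      · left
        have hS0 := hSq0 h4m
        refine ⟨?_, Or.inr h4m⟩
        rcases hW0form with h | h
        · left; rw [h] at master; linear_combination master + hS0
        · right; rw [h] at master; linear_combination -master - hS0
      · right
        refine ⟨⟨hk2n1, hk2n2⟩, h4m, ?_⟩
        have hSD := hSq2 h4m
        have hDv := hDval hD0
        rcases hW0form with h | h
        · left; rw [h] at master; linear_combination master + hSD + hDv
        · right; rw [h] at master; linear_combination -master - hSD - hDv - hhalfadd
  · intro hRHS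
    have hεη_mk : ∀ a b : ZMod n, (a = 1 ∨ a = -1) → (b = 1 ∨ b = -1) →
        (a * b = 1 ∨ a * b = -1) := by
      rintro a b (rfl | rfl) (rfl | rfl)
      · left; ring
      · right; ring
      · right; ring
      · left; ring
    obtain ⟨ε, hε, hME⟩ : ∃ ε : ZMod n, (ε = 1 ∨ ε = -1) ∧
        ε * (k * ℓ) = ℓ + ((m/2 : ℕ) : ZMod n) * D := by
      rcases hRHS with ⟨hlk, hsq | h4m⟩ | ⟨⟨hk1, hk2'⟩, h4m, hlk⟩
      · have hD0 : D = 0 := by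
          rcases hsq with h | h
          · exact hD0_of_sq 1 (Or.inl rfl) h
          · exact hD0_of_sq (-1) (Or.inr rfl) h
        rcases hlk with h | h
        · exact ⟨1, Or.inl rfl, by rw [hD0]; linear_combination h⟩
        · exact ⟨-1, Or.inr rfl, by rw [hD0]; linear_combination -h⟩
      · have hS0 := hSq0 h4m
        rcases hlk with h | h
        · exact ⟨1, Or.inl rfl, by linear_combination h - hS0⟩
        · exact ⟨-1, Or.inr rfl, by linear_combination -h - hS0⟩
      · have hDne : D ≠ 0 := by
          intro h
          have h1 : k' = η * k := by rw [hDdef] at h; linear_combination h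
          have h2 : η * k ^ 2 = 1 := by rw [h1] at hkk'; linear_combination hkk'
          have hk2 : k ^ 2 = η := by linear_combination η * h2 - k^2 * hη21
          rcases hη with rfl | rfl
          · exact hk1 hk2
          · exact hk2' hk2
        have hSD := hSq2 h4m
        have hDv := hDval hDne
        rcases hlk with h | h
        · exact ⟨1, Or.inl rfl, by linear_combination h - hSD - hDv⟩
        · exact ⟨-1, Or.inr rfl, by linear_combination -h - hSD - hDv - hhalfadd⟩
    have hε2 : ε * ε = 1 := by rcases hε with rfl | rfl <;> ring
    have hεη := hεη_mk ε η hε hη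
    have hεodd : ε.val % 2 = 1 := by
      rcases hε with rfl | rfl
      · rw [hval1n]
      · rw [show (-1 : ZMod n) = -(1 : ZMod n) by ring, parity_neg hneven, hval1n]
    set e : ZMod m → ZMod n := fun p => if p.val % 2 = 0 then ε * k else ε * η * k' with hedef
    set c : ZMod m → ZMod n := fun p =>
      1 + ((p.val / 2 : ℕ) : ZMod n) * D + (if p.val = m - 1 then ℓ else 0) with hcdef
    set F : ZMod m × ZMod n → ZMod m × ZMod n :=
      fun u => (u.1 + 1, e u.1 * u.2 + c u.1) with hFdef
    have heodd : ∀ p : ZMod m, (e p).val % 2 = 1 := by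
      intro p
      simp only [hedef]
      split
      · rw [parity_mul hneven, Nat.mul_mod, hεodd, hkodd]
      · have h1 := parity_mul hneven (ε*η) k'
        have h2 := parity_mul hneven ε η
        have h3 : ε.val * η.val % 2 = 1 := by rw [Nat.mul_mod, hεodd, hηodd]
        have h4 : (ε*η).val * k'.val % 2 = 1 := by rw [Nat.mul_mod, h2, h3, hk'odd]
        omega
    have hcodd : ∀ p : ZMod m, (c p).val % 2 = 1 := by
      intro p
      simp only [hcdef]
      have ha := parity_add hneven ((1 : ZMod n) + ((p.val / 2 : ℕ) : ZMod n) * D)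
        (if p.val = m - 1 then ℓ else (0 : ZMod n))
      have hb := parity_add hneven (1 : ZMod n) (((p.val / 2 : ℕ) : ZMod n) * D)
      have hcmul := parity_mul hneven ((p.val / 2 : ℕ) : ZMod n) D
      have hdd : ((p.val / 2 : ℕ) : ZMod n).val * D.val % 2 = 0 := by
        rw [Nat.mul_mod, hDeven, Nat.mul_zero, Nat.zero_mod]
      have hite : (if p.val = m - 1 then ℓ else (0 : ZMod n)).val % 2 = 0 := by
        split
        · exact hl
        · rw [ZMod.val_zero]
      rw [hval1n] at hb
      omega
    have haffpar : ∀ (p : ZMod m) (y : ZMod n), (e p * y + c p).val % 2 = (y.val + 1) % 2 := by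
      intro p y
      have ha := parity_add hneven (e p * y) (c p)
      have hb := parity_mul hneven (e p) y
      have h1 : (e p).val * y.val % 2 = y.val % 2 := by
        rw [Nat.mul_mod, heodd p, one_mul, Nat.mod_mod_of_dvd y.val (dvd_refl 2)]
      have hc := hcodd p
      omega
    have heinv : ∀ p : ZMod m, e p * (if p.val % 2 = 0 then ε * k' else ε * η * k) = 1 := by
      intro p
      simp only [hedef]
      by_cases hp : p.val % 2 = 0
      · rw [if_pos hp, if_pos hp]
        linear_combination (k * k') * hε2 + hkk'
      · rw [if_neg hp, if_neg hp]
        linear_combination (η * η * k * k') * hε2 + (k * k') * hη21 + hkk'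
    have hFinj : Function.Injective F := by
      intro u v huv
      have h1 : u.1 + 1 = v.1 + 1 := congrArg Prod.fst huv
      have h1' : u.1 = v.1 := by linear_combination h1
      have h2 : e u.1 * u.2 + c u.1 = e v.1 * v.2 + c v.1 := congrArg Prod.snd huv
      rw [← h1'] at h2
      have h3 : e u.1 * (u.2 - v.2) = 0 := by linear_combination h2
      have h4 := heinv u.1
      have h5 : u.2 - v.2 = 0 := by
        linear_combination (if u.1.val % 2 = 0 then ε * k' else ε * η * k) * h3 -
          (u.2 - v.2) * h4
      exact Prod.ext_iff.mpr ⟨h1', by linear_combination h5⟩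
    have eqA : ∀ p : ZMod m, p.val + 3 ≤ m → ∀ j : ZMod n, j.val % 2 = p.val % 2 →
        e p * j + c p = e (p + 1) * j + c (p + 1) := by
      intro p hp j hj
      have hp1 : (p + 1).val = p.val + 1 := hval_succ p (by omega)
      have hif1 : ¬ p.val = m - 1 := by omega
      simp only [hedef, hcdef, hp1]
      rw [if_neg hif1, if_neg (show ¬ p.val + 1 = m - 1 by omega)]
      by_cases hpar : p.val % 2 = 0
      · rw [if_pos hpar, if_neg (show ¬ (p.val + 1) % 2 = 0 by omega),
          show (p.val + 1) / 2 = p.val / 2 by omega]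
        have hDj := hDx0 j (by omega)
        linear_combination (-(ε * η)) * hDj + (-(ε * k * j)) * hη21
      · rw [if_neg hpar, if_pos (show (p.val + 1) % 2 = 0 by omega),
          show (p.val + 1) / 2 = p.val / 2 + 1 by omega]
        have hDj := hDx1 j (by omega)
        have hsg := hsgnD (ε * η) hεη
        push_cast
        linear_combination (ε * η) * hDj + hsg + (ε * k * j) * hη21
    have eqB : ∀ j : ZMod n, j.val % 2 = 0 →
        e M1 * j + c M1 = e M2 * j + c M2 + ℓ := by
      intro j hj
      simp only [hedef, hcdef]
      rw [if_neg (show ¬ M1.val % 2 = 0 by rw [hM1v]; omega),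
        if_pos (show M2.val % 2 = 0 by rw [hM2v]; omega),
        if_pos hM1v, if_neg (show ¬ M2.val = m - 1 by rw [hM2v]; omega),
        show M1.val / 2 = M2.val / 2 by rw [hM1v, hM2v]; omega]
      have hDj := hDx0 j hj
      linear_combination (ε * η) * hDj + (ε * k * j) * hη21
    have eqC : ∀ j : ZMod n, j.val % 2 = 1 →
        e M1 * j + c M1 = e 0 * (j + ℓ) + c 0 := by
      intro j hj
      simp only [hedef, hcdef]
      rw [if_neg (show ¬ M1.val % 2 = 0 by rw [hM1v]; omega),
        if_pos (show (0 : ZMod m).val % 2 = 0 by rw [ZMod.val_zero]),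
        if_pos hM1v, if_neg (show ¬ (0 : ZMod m).val = m - 1 by rw [ZMod.val_zero]; omega),
        show M1.val / 2 = m / 2 - 1 by rw [hM1v]; omega,
        show (0 : ZMod m).val / 2 = 0 by rw [ZMod.val_zero]]
      have hDj := hDx1 j hj
      have hsg := hsgnD (ε * η) hεη
      push_cast
      linear_combination (ε * η) * hDj + hsg + (ε * k * j) * hη21 - hME + D * hm21cast
    have hstepE : ∀ p : ZMod m, e p * kSig m n k p = kSig m n k (p + 1) ∨
        e p * kSig m n k p = -(kSig m n k (p + 1)) := by
      intro p
      rw [hsig_succ p]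
      simp only [hedef]
      unfold kSig
      by_cases hp : p.val % 2 = 0
      · simp only [if_pos hp]
        rcases hε with rfl | rfl
        · left; ring
        · right; ring
      · simp only [if_neg hp]
        rcases hε with rfl | rfl <;> rcases hη with rfl | rfl
        · left; linear_combination hkk'
        · right; linear_combination -hkk'
        · right; linear_combination -hkk'
        · left; linear_combination hkk'
    have hHpres : ∀ u v, (XaKFactor m n k).Adj u v → (XaKFactor m n k).Adj (F u) (F v) := by
      intro u v huv
      have h1 := (factor_adj hn hneven hkodd u.1 v.1 u.2 v.2).mp huv
      obtain ⟨hq, hz⟩ := h1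
      have hgoal : (XaKFactor m n k).Adj (u.1 + 1, e u.1 * u.2 + c u.1)
          (v.1 + 1, e v.1 * v.2 + c v.1) := by
        rw [hq]
        refine (factor_adj hn hneven hkodd (u.1 + 1) (u.1 + 1)
          (e u.1 * u.2 + c u.1) (e u.1 * v.2 + c u.1)).mpr ⟨rfl, ?_⟩
        rcases hz with hz | hz <;> rcases hstepE u.1 with hs | hs
        · left; rw [hz]; linear_combination hs
        · right; rw [hz]; linear_combination hs
        · right; rw [hz]; linear_combination -hs
        · left; rw [hz]; linear_combination -hs
      exact hgoal
    have hLkey : ∀ u v : ZMod m × ZMod n, u ≠ v → XaLinkRel m n ℓ u v →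
        (LGraph m n ℓ).Adj (F u) (F v) := by
      rintro ⟨p, y⟩ v hne (⟨hpar0, hple0, hv1, hv2⟩ | ⟨hpar0, hu1, hv1, hv2⟩)
      · have hpar : y.val % 2 = p.val % 2 := hpar0
        have hple : p.val ≤ m - 2 := hple0
        have hv : v = (p + 1, y) := Prod.ext_iff.mpr ⟨hv1, hv2⟩
        subst hv
        by_cases hcase : p.val + 3 ≤ m
        · have hx := eqA p hcase y hpar
          have hp1v : (p + 1).val = p.val + 1 := hval_succ p hple
          have hFu : F (p, y) = (p + 1, e p * y + c p) := rfl
          have hFv : F (p + 1, y) = (p + 1 + 1, e (p + 1) * y + c (p + 1)) := rfl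
          rw [hFu, hFv, ← hx]
          refine (link_adj_succ hm ℓ (p + 1) (by omega) _ _).mpr ⟨rfl, ?_⟩
          rw [haffpar p y, hp1v]
          omega
        · have hpm : p.val = m - 2 := by omega
          have hpM2 : p = M2 := by
            rw [hM2def, ← hpm, ZMod.natCast_rightInverse p]
          subst hpM2
          have hx := eqB y (by rw [hpar, hM2v]; omega)
          have hFu : F (M2, y) = (M2 + 1, e M2 * y + c M2) := rfl
          have hFv : F (M2 + 1, y) = (M2 + 1 + 1, e (M2 + 1) * y + c (M2 + 1)) := rfl
          rw [hFu, hFv, hM21]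
          have hM10 : M1 + 1 = 0 := by rw [hM1def]; exact m1_add_one hm
          rw [hM10]
          have hx' : e M1 * y + c M1 = (e M2 * y + c M2) + ℓ := hx
          rw [hx']
          rw [hM1def]
          refine (link_adj_wrap hm ℓ _ _).mpr ⟨rfl, ?_⟩
          rw [haffpar M2 y]
          have h9 := hM2v
          omega
      · have hpar : y.val % 2 = (m - 1) % 2 := hpar0
        have hv : v = (0, y + ℓ) := Prod.ext_iff.mpr ⟨hv1, hv2⟩
        subst hv
        have hpM1 : p = M1 := by rw [hM1def]; exact hu1
        subst hpM1
        have hx := eqC y (by rw [hpar]; omega)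
        have hFu : F (M1, y) = (M1 + 1, e M1 * y + c M1) := rfl
        have hFv : F (0, y + ℓ) = ((0 : ZMod m) + 1, e 0 * (y + ℓ) + c 0) := rfl
        have hM10 : M1 + 1 = 0 := by rw [hM1def]; exact m1_add_one hm
        rw [hFu, hFv, hM10, hx]
        refine (link_adj_succ hm ℓ 0 (show (0:ZMod m).val ≤ m - 2 by rw [ZMod.val_zero]; omega) _ _).mpr ⟨rfl, ?_⟩
        rw [← hx, haffpar M1 y, ZMod.val_zero]
        omega
    have hLpres : ∀ u v, (LGraph m n ℓ).Adj u v → (LGraph m n ℓ).Adj (F u) (F v) := by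
      intro u v huv
      rcases (SimpleGraph.fromRel_adj _ _ _).mp huv with ⟨hne, h | h⟩
      · exact hLkey u v hne h
      · exact (hLkey v u (Ne.symm hne) h).symm
    have hmono : ∀ u v, (XaK m n k ℓ).Adj u v → (XaK m n k ℓ).Adj (F u) (F v) := by
      intro u v huv
      rcases (xaK_adj_iff m n k ℓ u v).mp huv with h | h
      · exact (xaK_adj_iff m n k ℓ _ _).mpr (Or.inl (hHpres u v h))
      · exact (xaK_adj_iff m n k ℓ _ _).mpr (Or.inr (hLpres u v h))
    refine ⟨Equiv.ofBijective F (Finite.injective_iff_bijective.mp hFinj), ?_, ?_, ?_⟩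
    · intro u v
      constructor
      · intro h
        exact adj_rev (f := Equiv.ofBijective F (Finite.injective_iff_bijective.mp hFinj))
          (fun a b hab => hmono a b hab) u v h
      · intro h
        exact hmono u v h
    · intro u v h
      exact hHpres u v h
    · show F (0, 0) = (1, 1)
      have hc0 : c 0 = 1 := by
        simp only [hcdef]
        rw [if_neg (show ¬ (0 : ZMod m).val = m - 1 by rw [ZMod.val_zero]; omega),
          show (0 : ZMod m).val / 2 = 0 by rw [ZMod.val_zero]]
        push_cast
        ring
      refine Prod.ext_iff.mpr ⟨?_, ?_⟩
      · show (0 : ZMod m) + 1 = 1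
        ring
      · show e 0 * 0 + c 0 = 1
        rw [hc0]; ring



end CubicFIG
end

section
/- Let Γ = X_a(m,n,k,ℓ) where the parameters satisfy Condition (II). Then X_a(m,n,k,ℓ) and X_a(m,n,−k,ℓ) are the same graph, and Γ ≅ X_a(m,n,k,−ℓ). Moreover, if n is divisible by 4 and n = 2n', then Γ ≅ X_a(m,n,k+n',ℓ) when 4 | m, and Γ ≅ X_a(m,n,k+n',ℓ+n') when m ≡ 2 (mod 4). -/
namespace CubicFIG

open SimpleGraph

variable {V : Type*}

section Aux

private lemma pval_add {n : ℕ} [NeZero n] (hn : (2:ℕ) ∣ n) (x y : ZMod n) :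
    (x + y).val % 2 = (x.val + y.val) % 2 := by
  rw [ZMod.val_add, Nat.mod_mod_of_dvd _ hn]

private lemma pval_neg {n : ℕ} [NeZero n] (hn : (2:ℕ) ∣ n) (x : ZMod n) :
    (-x).val % 2 = x.val % 2 := by
  rcases eq_or_ne x 0 with rfl | hx
  · simp
  · have h1 : x.val < n := ZMod.val_lt x
    have h2 : x.val ≠ 0 := fun hh => hx ((ZMod.val_eq_zero x).mp hh)
    rw [ZMod.neg_val, if_neg hx]
    omega

private lemma nhalf_add_self {n : ℕ} (hn : (2:ℕ) ∣ n) :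
    ((n / 2 : ℕ) : ZMod n) + ((n / 2 : ℕ) : ZMod n) = 0 := by
  rw [← Nat.cast_add, show n / 2 + n / 2 = n by omega, ZMod.natCast_self]

private lemma nhalf_val {n : ℕ} [NeZero n] : ((n / 2 : ℕ) : ZMod n).val = n / 2 := by
  have h0 : 0 < n := Nat.pos_of_ne_zero (NeZero.ne n)
  rw [ZMod.val_natCast, Nat.mod_eq_of_lt (by omega)]

/-- The row/parity dependent shift used for the `k ↦ k + n/2` isomorphism. -/
private noncomputable def sh (m n : ℕ) (i : ZMod m) (j : ZMod n) : ZMod n :=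
  (if (i.val / 2) % 2 = 1 then ((n / 2 : ℕ) : ZMod n) else 0) +
  (if i.val % 2 = 1 ∧ j.val % 2 = 1 then ((n / 2 : ℕ) : ZMod n) else 0)

private lemma sh_val_even {m n : ℕ} [NeZero n] (hn4 : (4:ℕ) ∣ n) (i : ZMod m) (j : ZMod n) :
    (sh m n i j).val % 2 = 0 := by
  have h2 : (2:ℕ) ∣ n := by omega
  have hv : ((n / 2 : ℕ) : ZMod n).val % 2 = 0 := by rw [nhalf_val]; omega
  unfold sh
  rw [pval_add h2]
  split_ifs <;> (try simp only [ZMod.val_zero]) <;> omega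

private lemma sh_congr {m n : ℕ} (i : ZMod m) {j j' : ZMod n} (h : j.val % 2 = j'.val % 2) :
    sh m n i j = sh m n i j' := by unfold sh; rw [h]

private lemma sh_add_self {m n : ℕ} (hn : (2:ℕ) ∣ n) (i : ZMod m) (j : ZMod n) :
    sh m n i j + sh m n i j = 0 := by
  have h := nhalf_add_self hn
  unfold sh
  split_ifs
  · linear_combination 2 * h
  · linear_combination h
  · linear_combination h
  · ring

private noncomputable def shiftF (m n : ℕ) (p : ZMod m × ZMod n) : ZMod m × ZMod n :=
  (p.1, p.2 + sh m n p.1 p.2)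

private lemma shiftF_invol {m n : ℕ} [NeZero n] (hn4 : (4:ℕ) ∣ n) :
    Function.Involutive (shiftF m n) := by
  intro p
  have h2 : (2:ℕ) ∣ n := by omega
  have hpar : (p.2 + sh m n p.1 p.2).val % 2 = p.2.val % 2 := by
    rw [pval_add h2]
    have := sh_val_even hn4 p.1 p.2
    omega
  unfold shiftF
  dsimp only
  refine Prod.ext rfl ?_
  dsimp only
  rw [sh_congr p.1 hpar, add_assoc, sh_add_self h2, add_zero]

private def negF (m n : ℕ) (p : ZMod m × ZMod n) : ZMod m × ZMod n := (p.1, -p.2)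

private lemma negF_invol (m n : ℕ) : Function.Involutive (negF m n) := fun p => by
  simp [negF]

private noncomputable def fromRelIso {α : Type*} (f : α → α) (hf : Function.Involutive f)
    (R R' : α → α → Prop)
    (h1 : ∀ u v, R u v → R' (f u) (f v)) (h2 : ∀ u v, R' u v → R (f u) (f v)) :
    SimpleGraph.fromRel R ≃g SimpleGraph.fromRel R' where
  toEquiv := hf.toPerm
  map_rel_iff' := @fun a b => by
    show (SimpleGraph.fromRel R').Adj (f a) (f b) ↔ (SimpleGraph.fromRel R).Adj a b
    simp only [SimpleGraph.fromRel_adj]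
    constructor
    · rintro ⟨hne, hh | hh⟩
      · have h' := h2 _ _ hh; rw [hf a, hf b] at h'
        exact ⟨fun e => hne (congrArg f e), Or.inl h'⟩
      · have h' := h2 _ _ hh; rw [hf b, hf a] at h'
        exact ⟨fun e => hne (congrArg f e), Or.inr h'⟩
    · rintro ⟨hne, hh | hh⟩
      · exact ⟨fun e => hne (hf.injective e), Or.inl (h1 _ _ hh)⟩
      · exact ⟨fun e => hne (hf.injective e), Or.inr (h1 _ _ hh)⟩

private lemma hom2 {m n : ℕ} [NeZero n] (h2 : (2:ℕ) ∣ n) (a : ZMod m → ZMod n) (ℓ : ZMod n)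
    (u v : ZMod m × ZMod n)
    (h : XaCycleRel m n a (fun i => -(a i)) u v ∨ XaLinkRel m n ℓ u v) :
    XaCycleRel m n a (fun i => -(a i)) (negF m n u) (negF m n v) ∨
      XaLinkRel m n (-ℓ) (negF m n u) (negF m n v) := by
  obtain ⟨i, j⟩ := u; obtain ⟨i', j'⟩ := v
  simp only [XaCycleRel, XaLinkRel, negF] at h ⊢
  rcases h with ⟨hp, he, hv⟩ | (⟨hp, hle, h1, hsnd⟩ | ⟨hp, h0, h1, hsnd⟩)
  · refine Or.inl ⟨by rw [pval_neg h2]; exact hp, he, ?_⟩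
    rcases hv with hv | hv
    · right; rw [hv]; ring
    · left; rw [hv]; ring
  · exact Or.inr (Or.inl ⟨by rw [pval_neg h2]; exact hp, hle, h1, by rw [hsnd]⟩)
  · exact Or.inr (Or.inr ⟨by rw [pval_neg h2]; exact hp, h0, h1, by rw [hsnd]; ring⟩)

/-- The correction to `ℓ` in the `k ↦ k + n/2` isomorphism. -/
private noncomputable def deltaL (m n : ℕ) : ZMod n :=
  ((n / 2 : ℕ) : ZMod n) +
    (if ((((m - 1 : ℕ) : ZMod m)).val / 2) % 2 = 1 then ((n / 2 : ℕ) : ZMod n) else 0)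

private lemma hom3 {m n : ℕ} [NeZero m] [NeZero n] (hm : 4 ≤ m) (hm2 : m % 2 = 0)
    (hn4 : (4:ℕ) ∣ n) (k ℓ : ZMod n) (hk : k.val % 2 = 1) (u v : ZMod m × ZMod n)
    (h : XaCycleRel m n (kSig m n k) (fun i => -(kSig m n k i)) u v ∨ XaLinkRel m n ℓ u v) :
    XaCycleRel m n (kSig m n (k + ((n / 2 : ℕ) : ZMod n)))
        (fun i => -(kSig m n (k + ((n / 2 : ℕ) : ZMod n)) i)) (shiftF m n u) (shiftF m n v) ∨
      XaLinkRel m n (ℓ + deltaL m n) (shiftF m n u) (shiftF m n v) := by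
  have h2 : (2:ℕ) ∣ n := by omega
  have hNN := nhalf_add_self h2
  have hshpar : ∀ (i : ZMod m) (j : ZMod n), (j + sh m n i j).val % 2 = j.val % 2 := by
    intro i j
    rw [pval_add h2]
    have := sh_val_even hn4 i j
    omega
  obtain ⟨i, j⟩ := u; obtain ⟨i', j'⟩ := v
  simp only [XaCycleRel, XaLinkRel, shiftF] at h ⊢
  rcases h with ⟨hp, he, hv⟩ | (⟨hp, hle, h1, hsnd⟩ | ⟨hp, h0, h1, hsnd⟩)
  · -- cycle edges
    subst he
    by_cases hi : i.val % 2 = 0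
    · have hkk : kSig m n k i = 1 := by simp [kSig, hi]
      have hkk' : kSig m n (k + ((n / 2 : ℕ) : ZMod n)) i = 1 := by simp [kSig, hi]
      have hsh : sh m n i j' = sh m n i j := by simp [sh, hi]
      rw [hkk] at hv
      refine Or.inl ⟨by rw [hshpar]; exact hp, rfl, ?_⟩
      rw [hkk', hsh]
      rcases hv with hv | hv
      · left; rw [hv]; ring
      · right; rw [hv]; ring
    · have hi1 : i.val % 2 = 1 := by omega
      have hjodd : j.val % 2 = 1 := hp.trans hi1
      have hkk : kSig m n k i = k := by simp [kSig, hi]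
      have hkk' : kSig m n (k + ((n / 2 : ℕ) : ZMod n)) i
          = k + ((n / 2 : ℕ) : ZMod n) := by simp [kSig, hi]
      rw [hkk] at hv
      have hD : sh m n i j
          = (if (i.val / 2) % 2 = 1 then ((n / 2 : ℕ) : ZMod n) else 0)
            + ((n / 2 : ℕ) : ZMod n) := by
        simp [sh, hi1, hjodd]
      refine Or.inl ⟨by rw [hshpar]; exact hp, rfl, ?_⟩
      rw [hkk']
      rcases hv with hv | hv
      · have hj' : j'.val % 2 = 0 := by rw [hv, pval_add h2]; omega
        have hD' : sh m n i j' = (if (i.val / 2) % 2 = 1 then ((n / 2 : ℕ) : ZMod n) else 0) := by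
          simp [sh, hi1, hj']
        left; rw [hD, hD', hv]; linear_combination -hNN
      · have hj' : j'.val % 2 = 0 := by
          have := pval_neg h2 k
          rw [hv, pval_add h2]
          omega
        have hD' : sh m n i j' = (if (i.val / 2) % 2 = 1 then ((n / 2 : ℕ) : ZMod n) else 0) := by
          simp [sh, hi1, hj']
        right; rw [hD, hD', hv]; ring
  · -- ordinary link edges
    subst hsnd; subst h1
    have hvlt := ZMod.val_lt i
    have hval1 : (1 : ZMod m).val = 1 := by
      rw [ZMod.val_one_eq_one_mod]
      exact Nat.mod_eq_of_lt (by omega)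
    have hvi : (i + 1).val = i.val + 1 := by
      rw [ZMod.val_add, hval1]
      exact Nat.mod_eq_of_lt (by omega)
    have hsh : sh m n (i + 1) j' = sh m n i j' := by
      unfold sh
      rw [hvi]
      by_cases hi0 : i.val % 2 = 0
      · have hj : j'.val % 2 = 0 := by omega
        rw [show (i.val + 1) / 2 = i.val / 2 from by omega]
        simp [hj]
      · have hi1 : i.val % 2 = 1 := by omega
        have hj : j'.val % 2 = 1 := by omega
        rw [show (i.val + 1) / 2 = i.val / 2 + 1 from by omega,
            show (i.val + 1) % 2 = 0 from by omega]
        have hc2 : ¬((0:ℕ) = 1 ∧ j'.val % 2 = 1) := by simp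
        rw [if_neg hc2, if_pos (And.intro hi1 hj)]
        split_ifs <;> first | ring1 | linear_combination -hNN | (exfalso; omega)
    exact Or.inr (Or.inl ⟨by rw [hshpar]; exact hp, hle, rfl, by rw [hsh]⟩)
  · -- the wrap-around link edges
    subst h0; subst h1; subst hsnd
    have hm1 : (m - 1) % 2 = 1 := by omega
    have hp1 : j.val % 2 = 1 := by omega
    have hvm : (((m - 1 : ℕ)) : ZMod m).val = m - 1 := by
      rw [ZMod.val_natCast, Nat.mod_eq_of_lt (by omega)]
    have hs0 : sh m n (0 : ZMod m) (j + ℓ) = 0 := by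
      simp [sh, ZMod.val_zero]
    have hsm : sh m n ((m - 1 : ℕ) : ZMod m) j
        = (if ((m - 1) / 2) % 2 = 1 then ((n / 2 : ℕ) : ZMod n) else 0)
          + ((n / 2 : ℕ) : ZMod n) := by
      unfold sh
      rw [hvm, if_pos (And.intro hm1 hp1)]
    have hdl : deltaL m n
        = ((n / 2 : ℕ) : ZMod n)
          + (if ((m - 1) / 2) % 2 = 1 then ((n / 2 : ℕ) : ZMod n) else 0) := by
      unfold deltaL
      rw [hvm]
    refine Or.inr (Or.inr ⟨by rw [hshpar]; exact hp, rfl, rfl, ?_⟩)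
    rw [hs0, hsm, hdl]
    split_ifs
    · linear_combination -2 * hNN
    · linear_combination -hNN

end Aux

/-- isomorphisms between the `X_a(m,n,k,ℓ)` graphs. -/
theorem statement11 (m n : ℕ) (k ℓ : ZMod n) (h : CondII m n k ℓ) :
    XaK m n k ℓ = XaK m n (-k) ℓ ∧
    Nonempty (XaK m n k ℓ ≃g XaK m n k (-ℓ)) ∧
    (4 ∣ n →
      ((4 ∣ m → Nonempty (XaK m n k ℓ ≃g XaK m n (k + (↑(n / 2) : ZMod n)) ℓ)) ∧
       (m % 4 = 2 → Nonempty
          (XaK m n k ℓ ≃g XaK m n (k + (↑(n / 2) : ZMod n)) (ℓ + (↑(n / 2) : ZMod n)))))) := by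
  obtain ⟨hm4, hm2, hn6, hn2, hl2, hk1, hkcop, h2k1, h2k2, h2ksq, hrest⟩ := h
  haveI : NeZero m := ⟨by omega⟩
  haveI : NeZero n := ⟨by omega⟩
  have h2 : (2:ℕ) ∣ n := by omega
  refine ⟨?_, ?_, ?_⟩
  · -- `X_a(m,n,k,ℓ) = X_a(m,n,-k,ℓ)`
    have key : ∀ u v : ZMod m × ZMod n,
        XaCycleRel m n (kSig m n k) (fun i => -(kSig m n k i)) u v ↔
        XaCycleRel m n (kSig m n (-k)) (fun i => -(kSig m n (-k) i)) u v := by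
      intro u v
      simp only [XaCycleRel, kSig]
      by_cases hi : u.1.val % 2 = 0 <;> simp [hi] <;> tauto
    unfold XaK XaGraph
    ext u v
    simp only [SimpleGraph.fromRel_adj, key]
  · -- `X_a(m,n,k,ℓ) ≅ X_a(m,n,k,-ℓ)`
    exact ⟨fromRelIso (negF m n) (negF_invol m n) _ _
      (hom2 h2 (kSig m n k) ℓ)
      (fun u v hh => by
        have := hom2 h2 (kSig m n k) (-ℓ) u v hh
        rwa [neg_neg] at this)⟩
  · -- `k ↦ k + n/2`
    intro hn4
    have hNN := nhalf_add_self h2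
    have hvm : (((m - 1 : ℕ)) : ZMod m).val = m - 1 := by
      rw [ZMod.val_natCast]
      exact Nat.mod_eq_of_lt (by omega)
    have hk' : (k + ((n / 2 : ℕ) : ZMod n)).val % 2 = 1 := by
      rw [pval_add h2, nhalf_val]
      omega
    have hdd : deltaL m n + deltaL m n = 0 := by
      unfold deltaL
      split_ifs
      · linear_combination 2 * hNN
      · linear_combination hNN
    have hkk2 : k + ((n / 2 : ℕ) : ZMod n) + ((n / 2 : ℕ) : ZMod n) = k := by
      rw [add_assoc, hNN, add_zero]
    have hll2 : ℓ + deltaL m n + deltaL m n = ℓ := by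
      rw [add_assoc, hdd, add_zero]
    have key : Nonempty
        (XaK m n k ℓ ≃g XaK m n (k + ((n / 2 : ℕ) : ZMod n)) (ℓ + deltaL m n)) :=
      ⟨fromRelIso (shiftF m n) (shiftF_invol hn4) _ _
        (hom3 hm4 hm2 hn4 k ℓ hk1)
        (fun u v hh => by
          have := hom3 hm4 hm2 hn4 (k + ((n / 2 : ℕ) : ZMod n)) (ℓ + deltaL m n) hk' u v hh
          rwa [hkk2, hll2] at this)⟩
    constructor
    · intro hmm
      have hδ : deltaL m n = 0 := by
        unfold deltaL
        rw [if_pos (show ((((m - 1 : ℕ) : ZMod m)).val / 2) % 2 = 1 by rw [hvm]; omega)]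
        exact hNN
      rw [hδ, add_zero] at key
      exact key
    · intro hmm
      have hδ : deltaL m n = ((n / 2 : ℕ) : ZMod n) := by
        unfold deltaL
        rw [if_neg (show ¬((((m - 1 : ℕ) : ZMod m)).val / 2) % 2 = 1 by rw [hvm]; omega),
          add_zero]
      rw [hδ] at key
      exact key


end CubicFIG
end
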